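/- arXiv:2405.16274 — 3 statements merged into one kernel-verified Lean document; each statement's English description precedes it below -/
import Mathlib

section
/- Let Q be as in the previous statement (4-block upper triangular, q₁,q₂,q₄ invertible, q₃ singular). If ψ ≠ 0 satisfies q₃†ψ = 0, then (0, 0, ψ, −(q₄†)⁻¹ c₃₄† ψ)ᵀ is a nonzero element of the kernel of Q†, with support contained in the blocks corresponding to q₃ and q₄. -/
open Matrix

/-- For the 4-block upper triangular matrix `Q` with `q₁,q₂,q₄` invertible and `q₃`
singular, if `q₃ᴴ ψ = 0` with `ψ ≠ 0` then `(0, 0, ψ, −(q₄ᴴ)⁻¹ c₃₄ᴴ ψ)` is a nonzero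
kernel vector of `Qᴴ`, supported on blocks 3 and 4 only. -/
theorem stmt11 (n₁ n₂ n₃ n₄ : ℕ)
    (q₁ : Matrix (Fin n₁) (Fin n₁) ℂ) (q₂ : Matrix (Fin n₂) (Fin n₂) ℂ)
    (q₃ : Matrix (Fin n₃) (Fin n₃) ℂ) (q₄ : Matrix (Fin n₄) (Fin n₄) ℂ)
    (c₁₂ : Matrix (Fin n₁) (Fin n₂) ℂ) (c₁₃ : Matrix (Fin n₁) (Fin n₃) ℂ)
    (c₂₄ : Matrix (Fin n₂) (Fin n₄) ℂ) (c₃₄ : Matrix (Fin n₃) (Fin n₄) ℂ)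
    (h₁ : IsUnit q₁.det) (h₂ : IsUnit q₂.det) (h₄ : IsUnit q₄.det)
    (h₃ : q₃.det = 0)
    (ψ : Fin n₃ → ℂ) (hψ : ψ ≠ 0) (hker : q₃ᴴ.mulVec ψ = 0) :
    ((Matrix.fromBlocks (Matrix.fromBlocks q₁ c₁₂ 0 q₂)
        (Matrix.fromBlocks c₁₃ 0 0 c₂₄) 0
        (Matrix.fromBlocks q₃ c₃₄ 0 q₄))ᴴ).mulVec
      (Sum.elim (Sum.elim 0 0) (Sum.elim ψ (-((q₄ᴴ)⁻¹.mulVec (c₃₄ᴴ.mulVec ψ))))) = 0 ∧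
    Sum.elim (Sum.elim (0 : Fin n₁ → ℂ) (0 : Fin n₂ → ℂ))
      (Sum.elim ψ (-((q₄ᴴ)⁻¹.mulVec (c₃₄ᴴ.mulVec ψ)))) ≠ 0 := by
  constructor
  · have h4u : IsUnit (q₄ᴴ).det := by
      rw [Matrix.det_conjTranspose]; exact h₄.star
    have hinv : q₄ᴴ.mulVec ((q₄ᴴ)⁻¹.mulVec (c₃₄ᴴ.mulVec ψ)) = c₃₄ᴴ.mulVec ψ := by
      rw [Matrix.mulVec_mulVec, Matrix.mul_nonsing_inv _ h4u, Matrix.one_mulVec]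
    simp [Matrix.fromBlocks_conjTranspose, Matrix.fromBlocks_mulVec,
      Matrix.mulVec_add, hker, hinv, Matrix.mulVec_neg, ← Matrix.mul_assoc,
      Matrix.mul_nonsing_inv _ h4u]
  · intro h
    apply hψ
    funext i
    have := congrFun h (Sum.inr (Sum.inl i))
    simpa using this
end

section
/- Let Q be a block upper triangular matrix over a field with square diagonal blocks q₁,…,q_N where exactly one block q_c is singular and all others invertible, and suppose dim ker q_c = 1. Then dim ker Q = 1, and the unique (up to scalar) null vector of Q has its component in block c equal to a null vector of q_c; moreover its component in block j is zero whenever the (c,j) block and all chains of blocks connecting c to j through the upper-triangular structure vanish. -/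
open Matrix

/-- Block upper triangular `Q` with exactly one singular diagonal block `q_c` of
nullity one: then `dim ker Q = 1`, any null vector has block-`c` component a null
vector of `q_c` (nonzero whenever the vector is nonzero), and its component in block
`j` vanishes whenever no chain of nonzero off-diagonal blocks connects `j` to `c`. -/
theorem stmt12 (F : Type*) [Field F] (N : ℕ) (m : Fin N → ℕ)
    (Q : Matrix ((i : Fin N) × Fin (m i)) ((i : Fin N) × Fin (m i)) F)
    (htri : ∀ x y : (i : Fin N) × Fin (m i), y.1 < x.1 → Q x y = 0)
    (c : Fin N)
    (hc : (Matrix.of fun a b : Fin (m c) => Q ⟨c, a⟩ ⟨c, b⟩).det = 0)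
    (hker1 : Module.finrank F (LinearMap.ker (Matrix.toLin'
        (Matrix.of fun a b : Fin (m c) => Q ⟨c, a⟩ ⟨c, b⟩))) = 1)
    (hinv : ∀ i : Fin N, i ≠ c →
      IsUnit (Matrix.of fun a b : Fin (m i) => Q ⟨i, a⟩ ⟨i, b⟩).det) :
    Module.finrank F (LinearMap.ker (Matrix.toLin' Q)) = 1 ∧
    ∀ x : ((i : Fin N) × Fin (m i)) → F, Q.mulVec x = 0 →
      ((Matrix.of fun a b : Fin (m c) => Q ⟨c, a⟩ ⟨c, b⟩).mulVec
          (fun a => x ⟨c, a⟩) = 0 ∧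
        (x ≠ 0 → (fun a => x ⟨c, a⟩) ≠ 0)) ∧
      ∀ j : Fin N,
        ¬ Relation.ReflTransGen
            (fun i k : Fin N => i < k ∧ ∃ a b, Q ⟨i, a⟩ ⟨k, b⟩ ≠ 0) j c →
        ∀ a, x ⟨j, a⟩ = 0 := by
  classical
  set R : Fin N → Fin N → Prop :=
    fun i k : Fin N => i < k ∧ ∃ a b, Q ⟨i, a⟩ ⟨k, b⟩ ≠ 0 with hR
  -- the relation only goes upwards
  have hle : ∀ j k : Fin N, Relation.ReflTransGen R j k → j ≤ k := by
    intro j k h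
    induction h with
    | refl => exact le_rfl
    | tail _ hbc ih => exact ih.trans hbc.1.le
  -- row computation: if all the strictly-upper terms of row (j,a) vanish against x,
  -- then the diagonal-block row vanishes against x_j.
  have row : ∀ x : ((i : Fin N) × Fin (m i)) → F, Q.mulVec x = 0 →
      ∀ (j : Fin N) (a : Fin (m j)),
      (∀ k : Fin N, j < k → ∀ b : Fin (m k), Q ⟨j, a⟩ ⟨k, b⟩ * x ⟨k, b⟩ = 0) →
      ∑ b : Fin (m j), Q ⟨j, a⟩ ⟨j, b⟩ * x ⟨j, b⟩ = 0 := by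
    intro x hx j a h
    have h0 := congrFun hx ⟨j, a⟩
    rw [Matrix.mulVec, dotProduct, ← Finset.univ_sigma_univ,
      Finset.sum_sigma, Pi.zero_apply] at h0
    rw [← h0]
    symm
    apply Finset.sum_eq_single_of_mem j (Finset.mem_univ j)
    intro k _ hkj
    rcases lt_or_gt_of_ne hkj with hlt | hgt
    · apply Finset.sum_eq_zero
      intro b _
      rw [htri ⟨j, a⟩ ⟨k, b⟩ hlt, zero_mul]
    · apply Finset.sum_eq_zero
      intro b _
      exact h k hgt b
  -- a block with invertible diagonal block and vanishing upper terms has x_j = 0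
  have blockstep : ∀ x : ((i : Fin N) × Fin (m i)) → F, Q.mulVec x = 0 →
      ∀ j : Fin N, j ≠ c →
      (∀ k : Fin N, j < k → ∀ (a : Fin (m j)) (b : Fin (m k)),
        Q ⟨j, a⟩ ⟨k, b⟩ * x ⟨k, b⟩ = 0) →
      ∀ a : Fin (m j), x ⟨j, a⟩ = 0 := by
    intro x hx j hj h
    have hv : (Matrix.of fun a b : Fin (m j) => Q ⟨j, a⟩ ⟨j, b⟩).mulVec
        (fun b => x ⟨j, b⟩) = 0 := by
      funext a
      have := row x hx j a (fun k hk b => h k hk a b)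
      simpa [Matrix.mulVec, dotProduct] using this
    have : Invertible (Matrix.of fun a b : Fin (m j) => Q ⟨j, a⟩ ⟨j, b⟩) :=
      (Matrix.of fun a b : Fin (m j) => Q ⟨j, a⟩ ⟨j, b⟩).invertibleOfIsUnitDet
        (hinv j hj)
    have hinj := Matrix.mulVec_injective_of_invertible
      (Matrix.of fun a b : Fin (m j) => Q ⟨j, a⟩ ⟨j, b⟩)
    have hz : (fun b => x ⟨j, b⟩) = 0 := by
      apply hinj
      rw [hv, Matrix.mulVec_zero]
    intro a
    exact congrFun hz a
  -- components not connected to c vanish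
  have lemA : ∀ x : ((i : Fin N) × Fin (m i)) → F, Q.mulVec x = 0 →
      ∀ j : Fin N, ¬ Relation.ReflTransGen R j c → ∀ a, x ⟨j, a⟩ = 0 := by
    intro x hx
    have main : ∀ t : ℕ, ∀ j : Fin N, N - j.val ≤ t →
        ¬ Relation.ReflTransGen R j c → ∀ a, x ⟨j, a⟩ = 0 := by
      intro t
      induction t with
      | zero => intro j hjt; have := j.isLt; omega
      | succ t ih =>
        intro j hjt hj
        have hjc : j ≠ c := fun h => hj (h ▸ Relation.ReflTransGen.refl)
        apply blockstep x hx j hjc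
        intro k hk a b
        by_cases hQ : Q ⟨j, a⟩ ⟨k, b⟩ = 0
        · rw [hQ, zero_mul]
        · have hRjk : R j k := ⟨hk, a, b, hQ⟩
          have hkc : ¬ Relation.ReflTransGen R k c :=
            fun h => hj (Relation.ReflTransGen.head hRjk h)
          have hk' : (j : ℕ) < (k : ℕ) := hk
          have hkN := k.isLt
          have : x ⟨k, b⟩ = 0 := ih k (by omega) hkc b
          rw [this, mul_zero]
    intro j
    exact main (N - j.val) j le_rfl
  -- if the c-component vanishes, the whole vector vanishes
  have lemB : ∀ x : ((i : Fin N) × Fin (m i)) → F, Q.mulVec x = 0 →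
      (∀ a, x ⟨c, a⟩ = 0) → x = 0 := by
    intro x hx hxc
    have main : ∀ t : ℕ, ∀ j : Fin N, N - j.val ≤ t → ∀ a, x ⟨j, a⟩ = 0 := by
      intro t
      induction t with
      | zero => intro j hjt; have := j.isLt; omega
      | succ t ih =>
        intro j hjt
        by_cases hjc : j = c
        · subst hjc; exact hxc
        · apply blockstep x hx j hjc
          intro k hk a b
          have hk' : (j : ℕ) < (k : ℕ) := hk
          have hkN := k.isLt
          have : x ⟨k, b⟩ = 0 := ih k (by omega) b
          rw [this, mul_zero]
    funext y
    rcases y with ⟨j, a⟩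
    exact main (N - j.val) j le_rfl a
  -- the c-component is a null vector of q_c
  have lemC : ∀ x : ((i : Fin N) × Fin (m i)) → F, Q.mulVec x = 0 →
      (Matrix.of fun a b : Fin (m c) => Q ⟨c, a⟩ ⟨c, b⟩).mulVec
        (fun a => x ⟨c, a⟩) = 0 := by
    intro x hx
    funext a
    have hup : ∀ k : Fin N, c < k → ∀ b : Fin (m k), Q ⟨c, a⟩ ⟨k, b⟩ * x ⟨k, b⟩ = 0 := by
      intro k hk b
      have hkc : ¬ Relation.ReflTransGen R k c := fun h => absurd (hle k c h) (not_le.2 hk)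
      rw [lemA x hx k hkc b, mul_zero]
    have := row x hx c a hup
    simpa [Matrix.mulVec, dotProduct] using this
  -- det Q = 0
  have hBT : Q.BlockTriangular Sigma.fst := fun i j h => htri i j h
  have hdet : Q.det = 0 := by
    rw [hBT.det_fintype]
    apply Finset.prod_eq_zero (Finset.mem_univ c)
    let e : Fin (m c) ≃ {x : (i : Fin N) × Fin (m i) // x.1 = c} :=
      { toFun := fun a => ⟨⟨c, a⟩, rfl⟩
        invFun := fun y => Fin.cast (congrArg m y.2) y.1.2
        left_inv := fun a => rfl
        right_inv := fun y => by
          rcases y with ⟨⟨i, a⟩, h⟩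
          subst h
          rfl }
    have hsub : (Q.toSquareBlock Sigma.fst c).submatrix e e =
        Matrix.of fun a b : Fin (m c) => Q ⟨c, a⟩ ⟨c, b⟩ := rfl
    rw [← Matrix.det_submatrix_equiv_self e, hsub]
    exact hc
  -- a nonzero null vector exists
  obtain ⟨v, hv0, hv⟩ := (Matrix.exists_mulVec_eq_zero_iff).2 hdet
  have hvker : v ∈ LinearMap.ker (Matrix.toLin' Q) := by
    rw [LinearMap.mem_ker, Matrix.toLin'_apply, hv]
  -- the comparison map into ker q_c
  set qc := Matrix.of fun a b : Fin (m c) => Q ⟨c, a⟩ ⟨c, b⟩ with hqc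
  let φ : LinearMap.ker (Matrix.toLin' Q) →ₗ[F] LinearMap.ker (Matrix.toLin' qc) :=
    { toFun := fun x => ⟨fun a => x.1 ⟨c, a⟩, by
        have hx : Q.mulVec x.1 = 0 := by
          have := x.2
          rwa [LinearMap.mem_ker, Matrix.toLin'_apply] at this
        rw [LinearMap.mem_ker, Matrix.toLin'_apply]
        exact lemC x.1 hx⟩
      map_add' := fun x y => rfl
      map_smul' := fun r x => rfl }
  have hφinj : Function.Injective φ := by
    rw [injective_iff_map_eq_zero]
    intro x hx0
    have hx : Q.mulVec x.1 = 0 := by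
      have := x.2
      rwa [LinearMap.mem_ker, Matrix.toLin'_apply] at this
    have hval : (fun a => x.1 ⟨c, a⟩) = 0 := congrArg Subtype.val hx0
    have : x.1 = 0 := lemB x.1 hx (fun a => congrFun hval a)
    exact Subtype.ext this
  have hle1 : Module.finrank F (LinearMap.ker (Matrix.toLin' Q)) ≤ 1 := by
    have := LinearMap.finrank_le_finrank_of_injective hφinj
    omega
  have hge1 : 1 ≤ Module.finrank F (LinearMap.ker (Matrix.toLin' Q)) := by
    have hne : (⟨v, hvker⟩ : LinearMap.ker (Matrix.toLin' Q)) ≠ 0 := by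
      intro h
      exact hv0 (congrArg Subtype.val h)
    have : Nontrivial (LinearMap.ker (Matrix.toLin' Q)) := nontrivial_of_ne _ 0 hne
    have := (Module.finrank_pos_iff (R := F)
      (M := LinearMap.ker (Matrix.toLin' Q))).2 this
    omega
  refine ⟨le_antisymm hle1 hge1, ?_⟩
  intro x hx
  refine ⟨⟨lemC x hx, ?_⟩, fun j hj a => lemA x hx j hj a⟩
  intro hxne h
  exact hxne (lemB x hx (fun a => congrFun h a))
end

section
/- Let Q be a generic matrix whose determinant factors into N nonconstant irreducible factors, corresponding to sections g₁,…,g_N of the bipartite structure. Then among these sections there exists at least one 'edge section': a section g_i such that all edges between g_i and other sections attach to g_i from only one of the two vertex classes (only black sites of g_i connect externally, or only white sites of g_i connect externally). -/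
/-!
Suppose no section is an edge section. Then every section `c` sends an edge from its black class
to another section `f c`, and the fixed-point-free map `f` has a cycle. Inside every section on
the cycle, match the remaining vertices after deleting the black end of the edge leaving it and
the white end of the edge entering it; together with the cycle edges and perfect matchings of
the other sections this is a perfect matching through an inter-section edge, which is excluded.

The matchings inside a section exist because an irreducible generic determinant forces the strict
Hall condition `#A < #N(A)` for all nonempty proper row sets `A`: if `#N(A) = #A`, a column
permutation makes the matrix block triangular and the determinant splits into two factors
without constant term.
-/

open Equiv Finset

namespace Matrix

variable {α K : Type*} [Fintype α] [DecidableEq α] [CommRing K] {M : Matrix α α K}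

theorem exists_perm_forall_ne_zero_of_det_ne_zero (h : M.det ≠ 0) :
    ∃ σ : Perm α, ∀ a, M a (σ a) ≠ 0 := by
  contrapose! h
  rw [← det_transpose, det_apply]
  refine sum_eq_zero fun σ _ => ?_
  obtain ⟨a, ha⟩ := h σ
  rw [prod_eq_zero (mem_univ a) (by simpa using ha), smul_zero]

theorem card_le_card_of_det_ne_zero (h : M.det ≠ 0) {A B : Finset α}
    (hAB : ∀ a ∈ A, ∀ b ∉ B, M a b = 0) : #A ≤ #B := by
  obtain ⟨σ, hσ⟩ := exists_perm_forall_ne_zero_of_det_ne_zero h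
  refine card_le_card_of_injOn σ (fun a ha => ?_) σ.injective.injOn
  by_contra hb
  exact hσ a (hAB a ha _ hb)

variable {L : Type*} [CommRing L] [Nontrivial L] (φ : K →+* L)

theorem not_isUnit_det_of_forall_map_eq_zero [Nonempty α] (hM : ∀ a b, φ (M a b) = 0) :
    ¬IsUnit M.det := by
  intro hu
  have h0 : φ M.det = 0 := by
    rw [RingHom.map_det, show φ.mapMatrix M = 0 from ext hM, det_zero]
  exact not_isUnit_zero (h0 ▸ hu.map φ)

theorem not_irreducible_det_of_zero_block (hM : ∀ a b, φ (M a b) = 0) {A B : Finset α}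
    (hA : A.Nonempty) (hAu : A ≠ univ) (hcard : #B = #A) (hAB : ∀ a ∈ A, ∀ b ∉ B, M a b = 0) :
    ¬Irreducible M.det := by
  intro hirr
  let e : {a // a ∈ A} ≃ {b // b ∈ B} := Fintype.equivOfCardEq (by simp [hcard])
  let e' : {a // a ∉ A} ≃ {b // b ∉ B} :=
    Fintype.equivOfCardEq (by simp [Fintype.card_subtype_compl, hcard])
  let τ : Perm α := subtypeCongr e e'
  have hτ : ∀ a, τ a ∈ B ↔ a ∈ A := by
    intro a
    by_cases ha : a ∈ A
    · simp [τ, Equiv.subtypeCongr, sumCompl_symm_apply_of_pos ha, ha]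
    · simpa [τ, Equiv.subtypeCongr, sumCompl_symm_apply_of_neg ha, ha] using (e' ⟨a, ha⟩).2
  have hsplit := twoBlockTriangular_det (M.submatrix id τ) (· ∉ A)
    fun i hi j hj => hAB i (not_not.1 hi) _ ((hτ j).not.2 hj)
  have hirr' : Irreducible (M.submatrix id τ).det := by
    rw [det_permute']
    exact (irreducible_isUnit_mul ((Perm.sign τ).isUnit.map (Int.castRingHom K))).2 hirr
  obtain ⟨a, ha⟩ : ∃ a, a ∉ A := by
    by_contra! h
    exact hAu (eq_univ_iff_forall.2 h)
  have : Nonempty {a // a ∉ A} := ⟨⟨a, ha⟩⟩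
  have : Nonempty {a // ¬a ∉ A} := let ⟨a, ha⟩ := hA; ⟨⟨a, not_not.2 ha⟩⟩
  rcases hirr'.isUnit_or_isUnit hsplit with h | h <;>
    exact not_isUnit_det_of_forall_map_eq_zero φ (fun _ _ => hM _ _) h

theorem card_lt_card_of_irreducible_det (hM : ∀ a b, φ (M a b) = 0) (hirr : Irreducible M.det)
    {A B : Finset α} (hA : A.Nonempty) (hAu : A ≠ univ) (hAB : ∀ a ∈ A, ∀ b ∉ B, M a b = 0) :
    #A < #B :=
  (card_le_card_of_det_ne_zero hirr.ne_zero hAB).lt_of_ne fun h =>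
    not_irreducible_det_of_zero_block φ hM hA hAu h.symm hAB hirr

theorem exists_perm_apply_eq_of_irreducible_det (hM : ∀ a b, φ (M a b) = 0)
    (hirr : Irreducible M.det) (a₀ b₀ : α) : ∃ τ : Perm α, τ a₀ = b₀ ∧ ∀ a ≠ a₀, M a (τ a) ≠ 0 := by
  classical
  -- Hall's theorem for the supports of the rows, row `a₀` being allowed only the column `b₀`.
  let t : α → Finset α := fun a => if a = a₀ then {b₀} else ({b | M a b ≠ 0} : Finset α)
  have hall : ∀ s : Finset α, #s ≤ #(s.biUnion t) := by
    intro s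
    have hzero : ∀ a ∈ s.erase a₀, ∀ b ∉ s.biUnion t, M a b = 0 := by
      intro a ha b hb
      by_contra hab
      exact hb (mem_biUnion.2 ⟨a, mem_of_mem_erase ha, by simp [t, ne_of_mem_erase ha, hab]⟩)
    by_cases ha₀ : a₀ ∈ s
    · have : #(s.erase a₀) < #(s.biUnion t) := by
        rcases (s.erase a₀).eq_empty_or_nonempty with h | h
        · rw [h, card_empty, card_pos]
          exact ⟨b₀, mem_biUnion.2 ⟨a₀, ha₀, by simp [t]⟩⟩
        · refine card_lt_card_of_irreducible_det φ hM hirr h (fun h' => ?_) hzero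
          exact notMem_erase a₀ s (h' ▸ mem_univ a₀)
      rw [← card_erase_add_one ha₀]
      omega
    · rw [erase_eq_of_notMem ha₀] at hzero
      exact card_le_card_of_det_ne_zero hirr.ne_zero hzero
  obtain ⟨f, hf, hft⟩ := (all_card_le_biUnion_card_iff_exists_injective t).1 hall
  refine ⟨Equiv.ofBijective f (Finite.injective_iff_bijective.1 hf), by simpa [t] using hft a₀,
    fun a ha => by simpa [t, ha] using hft a⟩

end Matrix

open Matrix MvPolynomial

theorem exists_equiv_of_irreducible_det_ite_X {α γ σ R : Type*} [Fintype α] [DecidableEq α]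
    [CommRing R] [Nontrivial R] (P : α → γ → Prop) [∀ a b, Decidable (P a b)] (v : α → γ → σ)
    (e : α ≃ γ)
    (hirr : Irreducible (of fun a b => if P a (e b) then (X (v a (e b)) : MvPolynomial σ R)
      else 0).det) :
    (∃ τ : α ≃ γ, ∀ a, P a (τ a)) ∧ ∀ a₀ b₀, ∃ τ : α ≃ γ, τ a₀ = b₀ ∧ ∀ a ≠ a₀, P a (τ a) := by
  set M : Matrix α α (MvPolynomial σ R) := of fun a b => if P a (e b) then X (v a (e b)) else 0
  have hP : ∀ a b, M a b ≠ 0 → P a (e b) := fun a b h => by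
    by_contra hn
    exact h (by simp [M, hn])
  have hM : ∀ a b, constantCoeff (M a b) = 0 := fun a b => by
    simp only [M, of_apply]
    split_ifs <;> simp
  obtain ⟨π, hπ⟩ := exists_perm_forall_ne_zero_of_det_ne_zero hirr.ne_zero
  refine ⟨⟨π.trans e, fun a => hP _ _ (hπ a)⟩, fun a₀ b₀ => ?_⟩
  obtain ⟨τ, hτ, hτM⟩ :=
    exists_perm_apply_eq_of_irreducible_det constantCoeff hM hirr a₀ (e.symm b₀)
  exact ⟨τ.trans e, by simp [hτ], fun a ha => hP _ _ (hτM a ha)⟩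

namespace Function

theorem nonempty_periodicPts {κ : Type*} [Finite κ] [Nonempty κ] (f : κ → κ) :
    (periodicPts f).Nonempty := by
  obtain ⟨c⟩ := ‹Nonempty κ›
  obtain ⟨m, n, heq, hne⟩ : ∃ m n, f^[m] c = f^[n] c ∧ m ≠ n := by
    simpa [Injective] using not_injective_infinite_finite (f^[·] c)
  wlog hlt : m < n generalizing m n
  · exact this n m heq.symm hne.symm (by omega)
  refine ⟨f^[m] c, mk_mem_periodicPts (Nat.sub_pos_of_lt hlt) ?_⟩
  rw [IsPeriodicPt, IsFixedPt, ← iterate_add_apply, Nat.sub_add_cancel hlt.le, heq]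

theorem exists_perm_forall_eq_or_eq {κ : Type*} [Finite κ] [Nonempty κ] (f : κ → κ) :
    ∃ π : Perm κ, (∀ c, π c = f c ∨ π c = c) ∧ ∃ c, π c = f c := by
  classical
  obtain ⟨c₀, hc₀⟩ := nonempty_periodicPts f
  let π : Perm κ := Perm.ofSubtype ((bijOn_periodicPts f).equiv f)
  have hπ : ∀ c ∈ periodicPts f, π c = f c := fun c hc => by
    simp [π, Perm.ofSubtype_apply_of_mem _ hc, Set.BijOn.equiv]
  refine ⟨π, fun c => ?_, c₀, hπ c₀ hc₀⟩
  by_cases hc : c ∈ periodicPts f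
  · exact .inl (hπ c hc)
  · exact .inr (Perm.ofSubtype_apply_of_not_mem _ hc)

end Function

theorem exists_perm_forall_mem_and_apply_eq {β κ : Type*} [DecidableEq β] [Fintype κ]
    (S : Set (β × β)) (rB rW : β → κ)
    (hsec : ∀ c (a₀ : {i // rB i = c}) (b₀ : {j // rW j = c}),
      ∃ τ : {i // rB i = c} ≃ {j // rW j = c}, τ a₀ = b₀ ∧ ∀ a ≠ a₀, ((a : β), (τ a : β)) ∈ S)
    (π : Perm κ) (I J : κ → β) (hI : ∀ c, rB (I c) = c) (hJ : ∀ c, rW (J c) = π c)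
    (hS : ∀ c, (I c, J c) ∈ S) :
    ∃ σ : Perm β, (∀ k, (k, σ k) ∈ S) ∧ ∀ c, σ (I c) = J c := by
  choose τ hτ hτS using fun c =>
    hsec c ⟨I c, hI c⟩ ⟨J (π.symm c), by rw [hJ, π.apply_symm_apply]⟩
  -- `ρ` moves `I c` to `I (π c)`, which `ψ` sends to `J c`; any other black keeps its `τ`-partner.
  let ψ : β ≃ β := ofFiberEquiv τ
  have hψ : ∀ c (a : {i // rB i = c}), ψ a = τ c a := by
    rintro c ⟨k, rfl⟩
    rfl
  let Iemb : κ ↪ β := ⟨I, fun c c' h => by rw [← hI c, h, hI]⟩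
  let ρ : Perm β := π.viaFintypeEmbedding Iemb
  have hσI : ∀ c, ψ (ρ (I c)) = J c := fun c => by
    rw [show ρ (I c) = I (π c) from Perm.viaFintypeEmbedding_apply_image _ _ c,
      hψ (π c) ⟨I (π c), hI _⟩, hτ]
    exact congrArg J (π.symm_apply_apply c)
  refine ⟨ρ.trans ψ, fun k => ?_, hσI⟩
  by_cases hk : k ∈ Set.range Iemb
  · obtain ⟨c, rfl⟩ := hk
    show (I c, ψ (ρ (I c))) ∈ S
    rw [hσI]
    exact hS c
  · have hkI : (⟨k, rfl⟩ : {i // rB i = rB k}) ≠ ⟨I (rB k), hI _⟩ :=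
      fun h => hk ⟨rB k, (congrArg Subtype.val h).symm⟩
    show (k, ψ (ρ k)) ∈ S
    rw [Perm.viaFintypeEmbedding_apply_notMem_range _ _ hk, hψ (rB k) ⟨k, rfl⟩]
    exact hτS _ _ hkI

theorem stmt18_general (F : Type*) [Field F] (n N : ℕ) (hN : 0 < N)
    (S : Set (Fin n × Fin n)) [DecidablePred (· ∈ S)]
    (rB rW : Fin n → Fin N)
    (hintra : ∀ i j : Fin n, (i, j) ∈ S →
      (∃ σ : Equiv.Perm (Fin n), σ i = j ∧ ∀ k, (k, σ k) ∈ S) → rB i = rW j)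
    (hsec : ∀ c : Fin N,
      ∃ e : {i : Fin n // rB i = c} ≃ {j : Fin n // rW j = c},
        Irreducible (Matrix.det (Matrix.of
          fun a b : {i : Fin n // rB i = c} =>
            if ((a : Fin n), ((e b) : Fin n)) ∈ S
            then (MvPolynomial.X ((a : Fin n), ((e b) : Fin n)) :
              MvPolynomial (Fin n × Fin n) F)
            else 0)))
    (hne : ∀ c : Fin N, ∃ i, rB i = c) :
    ∃ c : Fin N,
      (∀ i j : Fin n, (i, j) ∈ S → rB i = c → rW j = c) ∨
      (∀ i j : Fin n, (i, j) ∈ S → rW j = c → rB i = c) := by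
  by_contra! hcon
  choose I₁ J₁ hS₁ hI₁ hJ₁ using fun c => (hcon c).1
  have hmatch := fun c => exists_equiv_of_irreducible_det_ite_X
    (fun (a : {i // rB i = c}) (b : {j // rW j = c}) => ((a : Fin n), (b : Fin n)) ∈ S)
    (fun a b => ((a : Fin n), (b : Fin n))) _ (hsec c).choose_spec
  have : Nonempty (Fin N) := ⟨⟨0, hN⟩⟩
  obtain ⟨π, hπ, c₀, hc₀⟩ := Function.exists_perm_forall_eq_or_eq fun c => rW (J₁ c)
  have hedge : ∀ c, ∃ i j, (i, j) ∈ S ∧ rB i = c ∧ rW j = π c := fun c => by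
    rcases hπ c with h | h
    · exact ⟨I₁ c, J₁ c, hS₁ c, hI₁ c, h.symm⟩
    · obtain ⟨i, hi⟩ := hne c
      obtain ⟨τ, hτ⟩ := (hmatch c).1
      exact ⟨i, τ ⟨i, hi⟩, hτ ⟨i, hi⟩, hi, by rw [h]; exact (τ _).2⟩
  choose I J hS hI hJ using hedge
  obtain ⟨σ, hσS, hσ⟩ :=
    exists_perm_forall_mem_and_apply_eq S rB rW (fun c => (hmatch c).2) π I J hI hJ hS
  have hsame := hintra (I c₀) (J c₀) (hS c₀) ⟨σ, hσ c₀, hσS⟩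
  exact hJ₁ c₀ (by rw [← hc₀, ← hJ, ← hsame, hI])

/-- Existence of an edge section: if the bipartite structure on support `S` is
partitioned into `N` nonempty sections (black rows via `rB`, white columns via
`rW`) such that every edge belonging to a perfect matching is intra-section and
every section carries an irreducible generic determinant, then some section `c`
connects to the other sections from only one of the two vertex classes. -/
theorem stmt18 (F : Type*) [Field F] (n N : ℕ) (hN : 0 < N)
    (S : Set (Fin n × Fin n)) [DecidablePred (· ∈ S)]
    (rB rW : Fin n → Fin N)
    (hpm : ∃ σ : Equiv.Perm (Fin n), ∀ k, (k, σ k) ∈ S)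
    (hintra : ∀ i j : Fin n, (i, j) ∈ S →
      (∃ σ : Equiv.Perm (Fin n), σ i = j ∧ ∀ k, (k, σ k) ∈ S) → rB i = rW j)
    (hsec : ∀ c : Fin N,
      ∃ e : {i : Fin n // rB i = c} ≃ {j : Fin n // rW j = c},
        Irreducible (Matrix.det (Matrix.of
          fun a b : {i : Fin n // rB i = c} =>
            if ((a : Fin n), ((e b) : Fin n)) ∈ S
            then (MvPolynomial.X ((a : Fin n), ((e b) : Fin n)) :
              MvPolynomial (Fin n × Fin n) F)
            else 0)))
    (hne : ∀ c : Fin N, ∃ i, rB i = c) :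
    ∃ c : Fin N,
      (∀ i j : Fin n, (i, j) ∈ S → rB i = c → rW j = c) ∨
      (∀ i j : Fin n, (i, j) ∈ S → rW j = c → rB i = c) :=
  stmt18_general F n N hN S rB rW hintra hsec hne
end
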